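/- For every integer m ≥ 1, let a_n = Σ_{k=0}^{⌊n/2⌋} B_m(n−k, k) be the n-th antidiagonal sum of the m-th triangle of the first family. Then for every n ≥ 2m, a_n = a_{n−1} + a_{n−3} + a_{n−5} + ⋯ + a_{n−2m+1} + a_{n−2m}. -/

import Mathlib

/-!
Away from the diagonal the triangle obeys Pascal's rule, so its antidiagonal sums satisfy the
Fibonacci recurrence `a (n + 2) = a (n + 1) + a n` up to the diagonal entries met by the
antidiagonals: `a (n + 2) + d n = a (n + 1) + a n + d (n + 2)`, where `d n = B m (n / 2) (n / 2)`
for even `n` and `d n = 0` for odd `n`. Unfolding the recurrence `m` times, always at the larger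
even index, telescopes the corrections to `d (n - 2m)` and `d n`, which agree because `d` has
period `2m`.
-/

/-- The `m`-th Pascal-like triangle of the first family: `B m n 0 = 1`,
`B m n n = 1` if `m ∣ n` and `0` otherwise, and Pascal's recurrence
`B m n k = B m (n-1) k + B m (n-1) (k-1)` for `0 < k < n`.
(Values with `k > n` are set to `0`.) -/
def B (m : ℕ) : ℕ → ℕ → ℕ
  | _, 0 => 1
  | 0, _ + 1 => 0
  | n + 1, k + 1 =>
      if n + 1 = k + 1 then (if m ∣ (n + 1) then 1 else 0)
      else if n + 1 < k + 1 then 0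
      else B m n (k + 1) + B m n k

open Finset

theorem add_eq_sum_odd_shifts_of_recurrence {M : Type*} [AddCancelCommMonoid M] {f d : ℕ → M}
    (hrec : ∀ n, f (n + 2) + d n = f (n + 1) + f n + d (n + 2)) (n j : ℕ) :
    f (n + 2 * j) + d n = ∑ i ∈ range j, f (n + 2 * j - (2 * i + 1)) + f n + d (n + 2 * j) := by
  induction j with
  | zero => simp
  | succ j ih =>
    have hstep := hrec (n + 2 * j)
    rw [sum_range_succ', show n + 2 * (j + 1) - (2 * 0 + 1) = n + 2 * j + 1 by omega]
    have hsum : ∑ i ∈ range j, f (n + 2 * (j + 1) - (2 * (i + 1) + 1)) =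
        ∑ i ∈ range j, f (n + 2 * j - (2 * i + 1)) :=
      sum_congr rfl fun i _ => by congr 1; omega
    rw [hsum, show n + 2 * (j + 1) = n + 2 * j + 2 by ring]
    apply add_right_cancel (b := d (n + 2 * j))
    calc f (n + 2 * j + 2) + d n + d (n + 2 * j)
        = f (n + 2 * j + 1) + (f (n + 2 * j) + d n) + d (n + 2 * j + 2) := by
          rw [add_right_comm _ (d n), hstep]; abel
      _ = _ := by rw [ih]; abel

section

variable (m : ℕ)

theorem B_zero_right (n : ℕ) : B m n 0 = 1 := by
  cases n <;> rfl

theorem B_self (n : ℕ) : B m n n = if m ∣ n then 1 else 0 := by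
  cases n <;> simp [B]

theorem B_succ_succ {n k : ℕ} (h : k < n) : B m (n + 1) (k + 1) = B m n (k + 1) + B m n k := by
  rw [B, if_neg (by omega), if_neg (by omega)]

def antidiagSum (n : ℕ) : ℕ := ∑ k ∈ range (n / 2 + 1), B m (n - k) k

def antidiagDiagEntry (n : ℕ) : ℕ := if Even n then B m (n / 2) (n / 2) else 0

theorem antidiagDiagEntry_two_mul (t : ℕ) : antidiagDiagEntry m (2 * t) = B m t t := by
  simp [antidiagDiagEntry]

theorem antidiagDiagEntry_of_odd {n : ℕ} (hn : Odd n) : antidiagDiagEntry m n = 0 := by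
  simp [antidiagDiagEntry, Nat.not_even_iff_odd.mpr hn]

theorem antidiagDiagEntry_add_two_mul (n : ℕ) :
    antidiagDiagEntry m (n + 2 * m) = antidiagDiagEntry m n := by
  simp only [antidiagDiagEntry, Nat.even_add, even_two_mul, iff_true,
    show (n + 2 * m) / 2 = n / 2 + m by omega, B_self, Nat.dvd_add_self_right]

theorem antidiagSum_eq_one_add (n : ℕ) :
    antidiagSum m n = 1 + ∑ k ∈ range (n / 2), B m (n - (k + 1)) (k + 1) := by
  rw [antidiagSum, sum_range_succ', Nat.sub_zero, B_zero_right, add_comm]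

theorem sum_B_pascal {n s : ℕ} (h : 2 * s ≤ n + 1) :
    ∑ k ∈ range s, B m (n + 2 - (k + 1)) (k + 1) =
      ∑ k ∈ range s, B m (n + 1 - (k + 1)) (k + 1) + ∑ k ∈ range s, B m (n - k) k := by
  rw [← sum_add_distrib]
  refine sum_congr rfl fun k hk => ?_
  rw [mem_range] at hk
  rw [show n + 2 - (k + 1) = n - k + 1 by omega, show n + 1 - (k + 1) = n - k by omega,
    B_succ_succ m (by omega)]

theorem antidiagSum_add_two (n : ℕ) :
    antidiagSum m (n + 2) + antidiagDiagEntry m n =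
      antidiagSum m (n + 1) + antidiagSum m n + antidiagDiagEntry m (n + 2) := by
  obtain ⟨t, rfl | rfl⟩ := Nat.even_or_odd' n
  · rw [antidiagSum_eq_one_add, antidiagSum_eq_one_add, antidiagSum,
      show (2 * t + 2) / 2 = t + 1 by omega, show (2 * t + 1) / 2 = t by omega,
      show 2 * t / 2 = t by omega, sum_range_succ, sum_range_succ (n := t),
      sum_B_pascal m (by omega), antidiagDiagEntry_two_mul,
      show antidiagDiagEntry m (2 * t + 2) = B m (t + 1) (t + 1) from
        antidiagDiagEntry_two_mul m (t + 1),
      show 2 * t + 2 - (t + 1) = t + 1 by omega, show 2 * t - t = t by omega]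
    ring
  · rw [antidiagSum_eq_one_add, antidiagSum_eq_one_add, antidiagSum,
      show (2 * t + 1 + 2) / 2 = t + 1 by omega, show (2 * t + 1 + 1) / 2 = t + 1 by omega,
      show (2 * t + 1) / 2 = t by omega, sum_B_pascal m (by omega),
      antidiagDiagEntry_of_odd m (odd_two_mul_add_one t),
      antidiagDiagEntry_of_odd m (by simp [parity_simps] : Odd (2 * t + 1 + 2))]
    ring

end

theorem stmt_6_general (m : ℕ) (a : ℕ → ℕ)
    (ha : ∀ n, a n = ∑ k ∈ Finset.range (n / 2 + 1), B m (n - k) k)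
    (n : ℕ) (hn : 2 * m ≤ n) :
    a n = (∑ i ∈ Finset.range m, a (n - (2 * i + 1))) + a (n - 2 * m) := by
  obtain rfl : a = antidiagSum m := funext ha
  obtain ⟨n, rfl⟩ : ∃ k, n = k + 2 * m := ⟨n - 2 * m, by omega⟩
  have key := add_eq_sum_odd_shifts_of_recurrence (antidiagSum_add_two m) n m
  rw [antidiagDiagEntry_add_two_mul] at key
  rw [Nat.add_sub_cancel]
  exact add_right_cancel key

/-- Antidiagonal sums of the `m`-th triangle satisfy
`a n = a (n-1) + a (n-3) + ⋯ + a (n-2m+1) + a (n-2m)` for `n ≥ 2m`. -/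
theorem stmt_6 (m : ℕ) (hm : 1 ≤ m) (a : ℕ → ℕ)
    (ha : ∀ n, a n = ∑ k ∈ Finset.range (n / 2 + 1), B m (n - k) k)
    (n : ℕ) (hn : 2 * m ≤ n) :
    a n = (∑ i ∈ Finset.range m, a (n - (2 * i + 1))) + a (n - 2 * m) :=
  stmt_6_general m a ha n hn
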